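/- For each non-negative integer n, define Q(n) = (1/2)·₃F₂(−(n−1)/2, −n/2, b; −n, (a+1)/2; 1), interpreted as the terminating sum over 0 ≤ k ≤ ⌊n/2⌋ of q(n,k) = ((−1)^k/(2·4^k))·C(n−k,k)·(b)_k/(((a+1)/2)_k), where C(n−k,k) is a binomial coefficient. Then for all integers n ≥ 1, 2(n+a)·Q(n+1) − (3n+2a)·Q(n) + (n+b)·Q(n−1) = 0, provided no denominator vanishes. -/

import Mathlib

open Complex Finset

/-- Pochhammer symbol (rising factorial) `(x)_k`. -/
noncomputable def poch (x : ℂ) (k : ℕ) : ℂ := ∏ i ∈ Finset.range k, (x + i)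

/-- The `k`-th summand `q(n,k)` of the terminating sum
`Q(n) = (1/2)·₃F₂(−(n−1)/2, −n/2, b; −n, (a+1)/2; 1)`; zero for `k > ⌊n/2⌋`. -/
noncomputable def qTerm (a b : ℂ) (n k : ℕ) : ℂ :=
  if k ≤ n / 2 then
    (-1 : ℂ) ^ k / (2 * 4 ^ k) * (Nat.choose (n - k) k) *
      (poch b k / poch ((a + 1) / 2) k)
  else 0

/-- `Q(n)`, a finite sum with `⌊n/2⌋ + 1` terms. -/
noncomputable def Qfun (a b : ℂ) (n : ℕ) : ℂ :=
  ∑ k ∈ Finset.range (n / 2 + 1), qTerm a b n k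

lemma poch_zero (x : ℂ) : poch x 0 = 1 := by simp [poch]

lemma poch_succ (x : ℂ) (k : ℕ) : poch x (k+1) = poch x k * (x + k) := by
  simp [poch, Finset.prod_range_succ]

lemma qTerm_eq (a b : ℂ) (n k : ℕ) :
    qTerm a b n k = (-1 : ℂ) ^ k / (2 * 4 ^ k) * (Nat.choose (n - k) k) *
      (poch b k / poch ((a + 1) / 2) k) := by
  unfold qTerm
  split
  · rfl
  · next h =>
    have hz : Nat.choose (n - k) k = 0 := Nat.choose_eq_zero_of_lt (by omega)
    simp [hz]

lemma Qfun_eq (a b : ℂ) (n M : ℕ) (h : n / 2 + 1 ≤ M) :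
    Qfun a b n = ∑ k ∈ Finset.range M, qTerm a b n k := by
  rw [Qfun]
  apply Finset.sum_subset
  · intro x hx
    simp only [Finset.mem_range] at *
    omega
  · intro x hx hx2
    simp only [Finset.mem_range, not_lt] at hx2
    rw [qTerm, if_neg (by omega)]

/-- Auxiliary telescoping function. -/
noncomputable def hfun (a b : ℂ) (n k : ℕ) : ℂ :=
  (-1 : ℂ) ^ k / (2 * 4 ^ k) * (b + k) * (Nat.choose (n - 1 - k) k) *
    (poch b k / poch ((a + 1) / 2) k)

lemma keyI (a b : ℂ) (n j : ℕ) (hn : 1 ≤ n) :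
    2 * ((n : ℂ) + a) * (Nat.choose (n - j) (j+1))
      - (3 * (n : ℂ) + 2 * a) * (Nat.choose (n - 1 - j) (j+1))
      + ((n : ℂ) + b) * (Nat.choose (n - (j+2)) (j+1))
    = (b + (j : ℂ) + 1) * (Nat.choose (n - (j+2)) (j+1))
      + (2 * a + 4 * (j : ℂ) + 2) * (Nat.choose (n - 1 - j) j) := by
  rcases le_or_gt n j with h | h
  · have h1 : n - j = 0 := by omega
    have h2 : n - 1 - j = 0 := by omega
    have h3 : n - (j+2) = 0 := by omega
    have hj : 1 ≤ j := by omega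
    rw [h1, h2, h3]
    have c1 : Nat.choose 0 (j+1) = 0 := Nat.choose_eq_zero_of_lt (by omega)
    have c2 : Nat.choose 0 j = 0 := Nat.choose_eq_zero_of_lt (by omega)
    rw [c1, c2]
    push_cast
    ring
  · obtain ⟨m, rfl⟩ : ∃ m, n = m + j + 1 := ⟨n - j - 1, by omega⟩
    have h1 : m + j + 1 - j = m + 1 := by omega
    have h2 : m + j + 1 - 1 - j = m := by omega
    rw [h1, h2]
    rcases m with _ | p
    · have h3 : 0 + j + 1 - (j+2) = 0 := by omega
      rw [h3]
      rcases Nat.eq_zero_or_pos j with rfl | hj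
      · norm_num
        ring
      · have c1 : Nat.choose 1 (j+1) = 0 := Nat.choose_eq_zero_of_lt (by omega)
        have c2 : Nat.choose 0 (j+1) = 0 := Nat.choose_eq_zero_of_lt (by omega)
        have c3 : Nat.choose 0 j = 0 := Nat.choose_eq_zero_of_lt (by omega)
        rw [c1, c2, c3]
        push_cast
        ring
    · have h3 : p + 1 + j + 1 - (j+2) = p := by omega
      rw [h3]
      rcases le_or_gt j (p+1) with hj | hj
      · have F1 : ((Nat.choose (p+2) (j+1) : ℕ) : ℂ)
            = (Nat.choose (p+1) j : ℕ) + (Nat.choose (p+1) (j+1) : ℕ) := by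
          exact_mod_cast congrArg (Nat.cast (R := ℂ)) (Nat.choose_succ_succ (p+1) j)
        have F2 : ((Nat.choose (p+1) (j+1) : ℕ) : ℂ)
            = (Nat.choose p j : ℕ) + (Nat.choose p (j+1) : ℕ) := by
          exact_mod_cast congrArg (Nat.cast (R := ℂ)) (Nat.choose_succ_succ p j)
        have hc : ((p + 1 - j : ℕ) : ℂ) = (p : ℂ) + 1 - (j : ℂ) := by
          rw [Nat.cast_sub (by omega)]
          push_cast; ring
        have F3 : ((Nat.choose (p+1) (j+1) : ℕ) : ℂ) * ((j : ℂ) + 1)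
            = ((Nat.choose (p+1) j : ℕ) : ℂ) * ((p : ℂ) + 1 - (j : ℂ)) := by
          rw [← hc]
          exact_mod_cast congrArg (Nat.cast (R := ℂ)) (Nat.choose_succ_right_eq (p+1) j)
        have F4 : ((p : ℂ) + 1) * ((Nat.choose p j : ℕ) : ℂ)
            = ((Nat.choose (p+1) j : ℕ) : ℂ) * ((p : ℂ) + 1 - (j : ℂ)) := by
          have h4 : (p + 1) * Nat.choose p j = Nat.choose (p+1) (j+1) * (j+1) :=
            Nat.add_one_mul_choose_eq p j
          have h4c : ((p : ℂ) + 1) * ((Nat.choose p j : ℕ) : ℂ)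
              = ((Nat.choose (p+1) (j+1) : ℕ) : ℂ) * ((j : ℂ) + 1) := by
            exact_mod_cast congrArg (Nat.cast (R := ℂ)) h4
          rw [h4c, F3]
        push_cast
        push_cast at F1 F2 F3 F4
        linear_combination 2 * ((p : ℂ) + (j : ℂ) + 2 + a) * F1 - ((p : ℂ) + 1) * F2 - F3 - F4
      · have c1 : Nat.choose (p+2) (j+1) = 0 := Nat.choose_eq_zero_of_lt (by omega)
        have c2 : Nat.choose (p+1) (j+1) = 0 := Nat.choose_eq_zero_of_lt (by omega)
        have c3 : Nat.choose p (j+1) = 0 := Nat.choose_eq_zero_of_lt (by omega)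
        have c4 : Nat.choose (p+1) j = 0 := Nat.choose_eq_zero_of_lt (by omega)
        rw [c1, c2, c3, c4]
        push_cast
        ring

lemma term_rec (a b : ℂ) (ha : ∀ k : ℕ, poch ((a + 1) / 2) k ≠ 0)
    (n : ℕ) (hn : 1 ≤ n) (j : ℕ) :
    2 * ((n : ℂ) + a) * qTerm a b (n+1) (j+1) - (3 * (n : ℂ) + 2 * a) * qTerm a b n (j+1)
      + ((n : ℂ) + b) * qTerm a b (n-1) (j+1)
    = hfun a b n (j+1) - hfun a b n j := by
  have e1 : n + 1 - (j+1) = n - j := by omega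
  have e2 : n - 1 - (j+1) = n - (j+2) := by omega
  have e0 : n - (j+1) = n - 1 - j := by omega
  rw [qTerm_eq, qTerm_eq, qTerm_eq, hfun, hfun, e1, e2, e0]
  have h1 : poch ((a + 1) / 2) j ≠ 0 := ha j
  have h2 : (a + 1) / 2 + (j : ℂ) ≠ 0 := by
    intro h
    apply ha (j+1)
    rw [poch_succ, h, mul_zero]
  rw [poch_succ b j, poch_succ ((a+1)/2) j, pow_succ, pow_succ]
  have key := keyI a b n j hn
  have hcinv : ((a + 1) / 2 + (j : ℂ)) * ((a + 1) / 2 + (j : ℂ))⁻¹ = 1 :=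
    mul_inv_cancel₀ h2
  simp only [div_mul_eq_div_div]
  push_cast
  linear_combination
    ((-1 : ℂ)^j * (-1) / (2 * (4^j * 4)) * (poch b j * (b + j)) *
      (poch ((a + 1) / 2) j)⁻¹ * ((a + 1) / 2 + (j : ℂ))⁻¹) * key
    - ((-1 : ℂ)^j / (2 * 4^j) * (b + j) * ((Nat.choose (n - 1 - j) j : ℕ) : ℂ) *
      poch b j * (poch ((a + 1) / 2) j)⁻¹) * hcinv
  
lemma term_zero (a b : ℂ) (n : ℕ) (hn : 1 ≤ n) :
    2 * ((n : ℂ) + a) * qTerm a b (n+1) 0 - (3 * (n : ℂ) + 2 * a) * qTerm a b n 0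
      + ((n : ℂ) + b) * qTerm a b (n-1) 0
    = hfun a b n 0 := by
  simp [qTerm, hfun, poch_zero]
  ring

lemma telescope (f g : ℕ → ℂ) (h0 : f 0 = g 0) (hs : ∀ k, f (k+1) = g (k+1) - g k)
    (M : ℕ) : ∑ k ∈ Finset.range (M+1), f k = g M := by
  induction M with
  | zero => simpa using h0
  | succ M ih => rw [Finset.sum_range_succ, ih, hs]; ring

/-- `Q(n)` satisfies the second order recurrence. -/
theorem Q_recurrence (a b : ℂ) (ha : ∀ k : ℕ, poch ((a + 1) / 2) k ≠ 0)
    (n : ℕ) (hn : 1 ≤ n) :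
    2 * ((n : ℂ) + a) * Qfun a b (n + 1) - (3 * (n : ℂ) + 2 * a) * Qfun a b n
      + ((n : ℂ) + b) * Qfun a b (n - 1) = 0 := by
  set M := n / 2 + 1 with hM
  rw [Qfun_eq a b (n+1) (M+1) (by omega), Qfun_eq a b n (M+1) (by omega),
    Qfun_eq a b (n-1) (M+1) (by omega)]
  rw [Finset.mul_sum, Finset.mul_sum, Finset.mul_sum, ← Finset.sum_sub_distrib,
    ← Finset.sum_add_distrib]
  have := telescope
    (fun k => 2 * ((n : ℂ) + a) * qTerm a b (n+1) k - (3 * (n : ℂ) + 2 * a) * qTerm a b n k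
      + ((n : ℂ) + b) * qTerm a b (n-1) k)
    (hfun a b n) (term_zero a b n hn) (term_rec a b ha n hn) M
  rw [this]
  have hz : Nat.choose (n - 1 - M) M = 0 := Nat.choose_eq_zero_of_lt (by omega)
  simp [hfun, hz]
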